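/- If α < ε₀ (as an actual well-ordered ordinal) then for every f: ℕ → ℕ the computation of F_{α,f}(x) terminates for all x: there exists l with K_f^{(l)}(⟨α⟩, x) = (⟨⟩, y) for some y. (Proof: the map (σ,x) ↦ h(σ,x) = Σ_i ω^{σ_i} strictly decreases below ω^α at each step while positive.) -/

import Mathlib

open Ordinal

/-! Every step of `K_f` on a nonempty stack strictly lowers the ordinal `hOrd` of the stack: a
summand `ω^{α}` is dropped, replaced by `ω^{β} * (x + 1) < ω^{β + 1}`, or replaced by
`ω^{α[x]} < ω^{α}`. Well-foundedness of the ordinals then forces the stack to empty. -/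

/-- One step `K_f` of the canonical computation of the fast-growing hierarchy
relative to `f`, on a stack of ordinal notations below `ε₀` (head = topmost
entry `α_n`) together with a natural number argument:
`K_f(α₀…α_n, x) = (α₀…α_{n-1}, f(x))` if `α_n = 0`;
`(α₀…α_{n-1} β…β (x+1 copies), 1)` if `α_n = β+1`;
`(α₀…α_{n-1} α_n[x], x)` if `α_n` is a limit; and `K_f(⟨⟩, x) = (⟨⟩, x)`. -/
def Kstep (f : ℕ → ℕ) : List ONote × ℕ → List ONote × ℕ
  | ([], x) => ([], x)
  | (α :: rest, x) =>
    match α.fundamentalSequence with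
    | Sum.inl none => (rest, f x)
    | Sum.inl (some β) => (List.replicate (x + 1) β ++ rest, 1)
    | Sum.inr g => (g x :: rest, x)

/-- The ordinal `h(α₀…α_n, x) = ω^{α₀} + ⋯ + ω^{α_n}` associated to a stack
(head of the list is the topmost entry `α_n`); `h(⟨⟩, x) = 0`. -/
noncomputable def hOrd (σ : List ONote) : Ordinal.{0} :=
  σ.foldr (fun α acc => acc + omega0 ^ α.repr) 0

/-- `F_{α,f}(x) = y`: the iteration of the one-step computation `K_f` starting
from `(⟨α⟩, x)` reaches the empty stack with value `y`. -/
def Fval (f : ℕ → ℕ) (α : ONote) (x y : ℕ) : Prop :=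
  ∃ l : ℕ, (Kstep f)^[l] ([α], x) = ([], y)

theorem Function.exists_iterate_of_measure_decreasing {α β : Type*} [Preorder β] [WellFoundedLT β]
    (g : α → α) (μ : α → β) (p : α → Prop) (hg : ∀ s, ¬p s → μ (g s) < μ s) (s : α) :
    ∃ l, p (g^[l] s) := by
  induction s using (InvImage.wf μ wellFounded_lt).induction with
  | _ s ih =>
    by_cases hs : p s
    · exact ⟨0, hs⟩
    · obtain ⟨l, hl⟩ := ih (g s) (hg s hs)
      exact ⟨l + 1, hl⟩

lemma hOrd_cons (α : ONote) (rest : List ONote) :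
    hOrd (α :: rest) = hOrd rest + ω ^ α.repr := rfl

lemma hOrd_replicate_append (n : ℕ) (β : ONote) (rest : List ONote) :
    hOrd (List.replicate n β ++ rest) = hOrd rest + ω ^ β.repr * n := by
  induction n with
  | zero => simp [hOrd]
  | succ n ih =>
    rw [List.replicate_succ, List.cons_append, hOrd_cons, ih, Nat.cast_succ, mul_add, mul_one,
      add_assoc]

lemma hOrd_Kstep_cons_lt (f : ℕ → ℕ) (α : ONote) (rest : List ONote) (x : ℕ) :
    hOrd (Kstep f (α :: rest, x)).1 < hOrd (α :: rest) := by
  have hprop := ONote.fundamentalSequence_has_prop α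
  rcases hfs : α.fundamentalSequence with (_ | β) | g <;>
    simp only [Kstep, hfs, hOrd_cons] at hprop ⊢
  · exact lt_add_of_pos_right _ (opow_pos _ omega0_pos)
  · rw [hOrd_replicate_append, hprop.1, Order.succ_eq_add_one, opow_add, opow_one]
    exact add_lt_add_right
      (mul_lt_mul_of_pos_left (natCast_lt_omega0 _) (opow_pos _ omega0_pos)) _
  · exact add_lt_add_right
      ((opow_lt_opow_iff_right one_lt_omega0).2 (ONote.lt_def.1 (hprop.2.1 x).2.1)) _

theorem stmt_16_general (α : ONote) (f : ℕ → ℕ) (x : ℕ) :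
    ∃ l y, (Kstep f)^[l] ([α], x) = ([], y) := by
  have hdecr : ∀ s : List ONote × ℕ, s.1 ≠ [] → hOrd (Kstep f s).1 < hOrd s.1 := by
    rintro ⟨_ | ⟨a, rest⟩, y⟩ hne
    · exact absurd rfl hne
    · exact hOrd_Kstep_cons_lt f a rest y
  obtain ⟨l, hl⟩ := Function.exists_iterate_of_measure_decreasing (Kstep f) (fun s => hOrd s.1)
    (fun s => s.1 = []) hdecr ([α], x)
  exact ⟨l, _, Prod.ext hl rfl⟩

/-- For every ordinal notation `α` (denoting an actual well-ordered ordinal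
below `ε₀`) and every `f : ℕ → ℕ`, the computation of `F_{α,f}(x)` terminates
for every `x`. -/
theorem stmt_16 (α : ONote) (hα : α.NF) (f : ℕ → ℕ) (x : ℕ) :
    ∃ l y, (Kstep f)^[l] ([α], x) = ([], y) :=
  stmt_16_general α f x
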